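/- Let ε ∈ [0,1) and let k ≥ 1 be an integer. If (δ₀,…,δ_{k−1}) ∈ (0,1)^k is a critical point of R_ε (all k partial derivatives of R_ε vanish there), then the value of R_ε at this point satisfies R_ε(δ₀,…,δ_{k−1}) = log₂((1 − δ_{k−1})/δ_{k−1}). -/

import Mathlib

/-- The binary entropy function (base 2), with `H2 0 = H2 1 = 0`. -/
noncomputable def H2 (x : ℝ) : ℝ := -(x * Real.logb 2 x) - (1 - x) * Real.logb 2 (1 - x)

/-- The function `R_ε(δ₀,…,δ_{k−1})`. -/
noncomputable def Rfun (ε : ℝ) (k : ℕ) (δ : ℕ → ℝ) : ℝ :=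
  (∑ i ∈ Finset.range k, (1 - ε) ^ (i + 1) * H2 (δ i) * ∏ m ∈ Finset.range i, δ m) /
  (1 + ∑ i ∈ Finset.range k, (1 - ε) ^ (i + 1) * ∏ m ∈ Finset.range (i + 1), δ m)

/-! In the last coordinate `t = δ_{k-1}` alone, `R_ε` is a quotient `(A + c H₂(t)) / (B + c t)`
with `c > 0`. Where the derivative of a quotient `N / D` vanishes, `N / D = N' / D'`, and here
`N' / D' = H₂'(t) = log₂((1 - t) / t)`. -/

open Finset Function Real

lemma H2_eq_binEntropy_div_log_two : H2 = fun x => binEntropy x / log 2 := by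
  funext x
  simp only [H2, binEntropy, logb, log_inv]
  ring

lemma hasDerivAt_H2 {x : ℝ} (hx₀ : x ≠ 0) (hx₁ : x ≠ 1) :
    HasDerivAt H2 (logb 2 ((1 - x) / x)) x := by
  rw [H2_eq_binEntropy_div_log_two, logb, log_div (sub_ne_zero.mpr hx₁.symm) hx₀]
  exact (hasDerivAt_binEntropy hx₀ hx₁).div_const _

lemma div_eq_div_deriv_of_deriv_div_eq_zero {N D : ℝ → ℝ} {x n d : ℝ}
    (hN : HasDerivAt N n x) (hD : HasDerivAt D d x) (hDx : D x ≠ 0) (hd : d ≠ 0)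
    (hcrit : deriv (fun t => N t / D t) x = 0) :
    N x / D x = n / d := by
  rw [(hN.fun_div hD hDx).deriv, div_eq_zero_iff, sub_eq_zero] at hcrit
  rcases hcrit with hcrit | hsq
  · rw [div_eq_div_iff hDx hd]
    linarith
  · exact absurd (pow_eq_zero_iff two_ne_zero |>.mp hsq) hDx

section

variable (ε : ℝ) (k : ℕ) (δ : ℕ → ℝ)

noncomputable def Rnum : ℝ :=
  ∑ i ∈ range k, (1 - ε) ^ (i + 1) * H2 (δ i) * ∏ m ∈ range i, δ m

noncomputable def Rden : ℝ :=
  1 + ∑ i ∈ range k, (1 - ε) ^ (i + 1) * ∏ m ∈ range (i + 1), δ m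

lemma Rfun_eq_Rnum_div_Rden : Rfun ε k δ = Rnum ε k δ / Rden ε k δ := rfl

lemma Rnum_succ_update (t : ℝ) :
    Rnum ε (k + 1) (update δ k t) =
      Rnum ε k δ + (1 - ε) ^ (k + 1) * (∏ m ∈ range k, δ m) * H2 t := by
  rw [Rnum, Rnum, sum_range_succ, update_self, prod_update_of_notMem (by simp)]
  congr 1
  · refine sum_congr rfl fun i hi => ?_
    rw [mem_range] at hi
    rw [update_of_ne hi.ne, prod_update_of_notMem (by simp [hi.le])]
  · ring

lemma Rden_succ_update (t : ℝ) :
    Rden ε (k + 1) (update δ k t) =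
      Rden ε k δ + (1 - ε) ^ (k + 1) * (∏ m ∈ range k, δ m) * t := by
  rw [Rden, Rden, sum_range_succ, prod_range_succ, update_self,
    prod_update_of_notMem (by simp), add_assoc]
  congr 2
  · refine sum_congr rfl fun i hi => ?_
    rw [mem_range] at hi
    rw [prod_update_of_notMem (by rw [mem_range]; omega)]
  · ring

lemma Rden_pos (hε : ε ≤ 1) (hδ : ∀ i < k, 0 ≤ δ i) : 0 < Rden ε k δ := by
  have hsum : 0 ≤ ∑ i ∈ range k, (1 - ε) ^ (i + 1) * ∏ m ∈ range (i + 1), δ m := by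
    refine sum_nonneg fun i hi => mul_nonneg (pow_nonneg (by linarith) _) ?_
    refine prod_nonneg fun m hm => hδ m ?_
    rw [mem_range] at hi hm
    omega
  rw [Rden]
  linarith

end

/-- Let `ε ∈ [0,1)` and `k ≥ 1`.  If `(δ₀,…,δ_{k−1}) ∈ (0,1)^k` is a critical point of
`R_ε` (all `k` partial derivatives vanish there), then
`R_ε(δ₀,…,δ_{k−1}) = log₂((1 − δ_{k−1})/δ_{k−1})`. -/
theorem critical_point_value
    (ε : ℝ) (hε : ε ∈ Set.Ico (0 : ℝ) 1) (k : ℕ) (hk : 1 ≤ k)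
    (δ : ℕ → ℝ) (hδ : ∀ i < k, δ i ∈ Set.Ioo (0 : ℝ) 1)
    (hcrit : ∀ j < k,
      deriv (fun t : ℝ => Rfun ε k (Function.update δ j t)) (δ j) = 0) :
    Rfun ε k δ = Real.logb 2 ((1 - δ (k - 1)) / δ (k - 1)) := by
  obtain ⟨j, rfl⟩ : ∃ j, k = j + 1 := ⟨k - 1, by omega⟩
  rw [Nat.add_sub_cancel]
  obtain ⟨hx₀, hx₁⟩ := hδ j j.lt_succ_self
  have hcrit_last := hcrit j j.lt_succ_self
  simp only [Rfun_eq_Rnum_div_Rden, Rnum_succ_update, Rden_succ_update] at hcrit_last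
  rw [Rfun_eq_Rnum_div_Rden, ← update_eq_self j δ, Rnum_succ_update, Rden_succ_update,
    update_eq_self]
  set c := (1 - ε) ^ (j + 1) * ∏ m ∈ range j, δ m
  have hc : 0 < c := mul_pos (pow_pos (sub_pos.mpr hε.2) _)
    (prod_pos fun m hm => (hδ m (by rw [mem_range] at hm; omega)).1)
  have hden : 0 < Rden ε j δ + c * δ j :=
    add_pos (Rden_pos ε j δ hε.2.le fun i hi => (hδ i (by omega)).1.le) (by positivity)
  have hN := ((hasDerivAt_H2 hx₀.ne' hx₁.ne).const_mul c).const_add (Rnum ε j δ)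
  have hD := ((hasDerivAt_id' (δ j)).const_mul c).const_add (Rden ε j δ)
  rw [div_eq_div_deriv_of_deriv_div_eq_zero hN hD hden.ne' (by simpa using hc.ne') hcrit_last]
  field_simp
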